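/- Let B be an n×n real expanding matrix and D ⊂ ℝⁿ a finite set with 0 ∈ D. Suppose the set D_∞ is not uniformly discrete, i.e. for every δ > 0 there exist x ≠ y in D_∞ with ‖x − y‖ ≤ δ. Then D⁺(μ) = ∞. -/

import Mathlib

/-! If `D_∞` is not uniformly discrete then, for every `ε > 0`, there are `2 ^ m` distinct digit
strings whose points lie in one ball of radius `ε`: given `2 ^ m` such strings of length `K`,
take `x ≠ y` in `D_∞` so close that `B ^ K x` and `B ^ K y` are within `ε / 2`, write them with
digit strings `a ≠ b` of a common length (padding with the digit `0`), and append `a` or `b` to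
each string. As `μ` counts digit strings with multiplicity, boxes of any side `N > 0` carry
arbitrarily large `μ`-mass, so the density quotient is `∞` at every scale. -/

open MeasureTheory Filter
open scoped ENNReal

/-- The upper Beurling density of a positive Borel measure on ℝⁿ. -/
noncomputable def beurlingUpper {n : ℕ} (ν : Measure (EuclideanSpace ℝ (Fin n))) : ℝ≥0∞ :=
  Filter.limsup (fun N : ℝ =>
    ⨆ z : EuclideanSpace ℝ (Fin n),
      ν {y | ∀ i, |y i - z i| ≤ N / 2} / ENNReal.ofReal (N ^ n)) Filter.atTop

/-- The measure `μ = sup_N μ_N` associated with the pair `(B, D)`. -/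
noncomputable def selfAffineMeasure {n : ℕ} (B : Matrix (Fin n) (Fin n) ℝ)
    (D : Finset (EuclideanSpace ℝ (Fin n))) : Measure (EuclideanSpace ℝ (Fin n)) :=
  ⨆ N : ℕ, Measure.sum (fun f : Fin N → D =>
    Measure.dirac (∑ j : Fin N, Matrix.toEuclideanLin (B ^ (j : ℕ)) (f j)))

/-- `D_∞ = ⋃_{k ≥ 1} D_k` where `D_k = {Σ_{j<k} B^j ℓ_j : ℓ_j ∈ D}`. -/
def Dinfty {n : ℕ} (B : Matrix (Fin n) (Fin n) ℝ)
    (D : Finset (EuclideanSpace ℝ (Fin n))) : Set (EuclideanSpace ℝ (Fin n)) :=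
  {x | ∃ k : ℕ, 1 ≤ k ∧ ∃ f : Fin k → D,
    x = ∑ j : Fin k, Matrix.toEuclideanLin (B ^ (j : ℕ)) (f j)}

open Metric Finset

section DigitExpansion

variable {n : ℕ} (B : Matrix (Fin n) (Fin n) ℝ) (D : Finset (EuclideanSpace ℝ (Fin n)))

noncomputable def digitSum {K : ℕ} (f : Fin K → D) : EuclideanSpace ℝ (Fin n) :=
  ∑ j : Fin K, Matrix.toEuclideanLin (B ^ (j : ℕ)) (f j)

lemma digitSum_append {K k : ℕ} (f : Fin K → D) (g : Fin k → D) :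
    digitSum B D (Fin.append f g) =
      digitSum B D f + Matrix.toEuclideanLin (B ^ K) (digitSum B D g) := by
  simp only [digitSum, Fin.sum_univ_add, Fin.append_left, Fin.append_right, map_sum,
    Fin.val_castAdd, Fin.val_natAdd, pow_add, Matrix.toLpLin_mul_same, LinearMap.comp_apply]

variable {D}

lemma exists_digitSum_eq_of_le (hD0 : (0 : EuclideanSpace ℝ (Fin n)) ∈ D) {k K : ℕ}
    (hkK : k ≤ K) (f : Fin k → D) : ∃ f' : Fin K → D, digitSum B D f' = digitSum B D f := by
  obtain ⟨d, rfl⟩ := Nat.exists_eq_add_of_le hkK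
  refine ⟨Fin.append f fun _ => ⟨0, hD0⟩, ?_⟩
  rw [digitSum_append, add_eq_left]
  simp [digitSum]

lemma exists_digitSum_eq_of_mem_Dinfty (hD0 : (0 : EuclideanSpace ℝ (Fin n)) ∈ D)
    {x y : EuclideanSpace ℝ (Fin n)} (hx : x ∈ Dinfty B D) (hy : y ∈ Dinfty B D) :
    ∃ k : ℕ, ∃ a b : Fin k → D, digitSum B D a = x ∧ digitSum B D b = y := by
  obtain ⟨k₁, -, f₁, rfl⟩ := hx
  obtain ⟨k₂, -, f₂, rfl⟩ := hy
  obtain ⟨a, ha⟩ := exists_digitSum_eq_of_le B hD0 (le_max_left k₁ k₂) f₁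
  obtain ⟨b, hb⟩ := exists_digitSum_eq_of_le B hD0 (le_max_right k₁ k₂) f₂
  exact ⟨_, a, b, ha, hb⟩

end DigitExpansion

lemma exists_ne_norm_map_sub_le {E F : Type*} [NormedAddCommGroup E] [NormedSpace ℝ E]
    [NormedAddCommGroup F] [NormedSpace ℝ F] {X : Set E}
    (hX : ∀ δ : ℝ, 0 < δ → ∃ x ∈ X, ∃ y ∈ X, x ≠ y ∧ ‖x - y‖ ≤ δ) (T : E →L[ℝ] F)
    {ε : ℝ} (hε : 0 < ε) : ∃ x ∈ X, ∃ y ∈ X, x ≠ y ∧ ‖T (x - y)‖ ≤ ε := by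
  have hT : 0 < ‖T‖ + 1 := by positivity
  obtain ⟨x, hx, y, hy, hxy, hdist⟩ := hX (ε / (‖T‖ + 1)) (by positivity)
  refine ⟨x, hx, y, hy, hxy, ?_⟩
  calc ‖T (x - y)‖ ≤ ‖T‖ * ‖x - y‖ := T.le_opNorm _
    _ ≤ (‖T‖ + 1) * (ε / (‖T‖ + 1)) := by gcongr; linarith
    _ = ε := mul_div_cancel₀ ε hT.ne'

lemma closedBall_subset_box {ι : Type*} [Fintype ι] (c : EuclideanSpace ℝ ι) (r : ℝ) :
    closedBall c r ⊆ {y | ∀ i, |y i - c i| ≤ r} := fun y hy i =>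
  (PiLp.dist_apply_le y c i).trans (mem_closedBall.mp hy)

section NotUniformlyDiscrete

variable {n : ℕ} {B : Matrix (Fin n) (Fin n) ℝ} {D : Finset (EuclideanSpace ℝ (Fin n))}

lemma exists_many_digitSum_mem_closedBall (hD0 : (0 : EuclideanSpace ℝ (Fin n)) ∈ D)
    (hnd : ∀ δ : ℝ, 0 < δ → ∃ x ∈ Dinfty B D, ∃ y ∈ Dinfty B D, x ≠ y ∧ ‖x - y‖ ≤ δ)
    (m : ℕ) {ε : ℝ} (hε : 0 < ε) :
    ∃ K : ℕ, ∃ S : Finset (Fin K → D), 2 ^ m ≤ #S ∧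
      ∃ c, ∀ f ∈ S, digitSum B D f ∈ closedBall c ε := by
  induction m generalizing ε with
  | zero => exact ⟨0, {Fin.elim0}, by simp, 0, by simp [digitSum, hε.le]⟩
  | succ m ih =>
    obtain ⟨K, S, hS, c, hSc⟩ := ih (half_pos hε)
    let T := LinearMap.toContinuousLinearMap (Matrix.toEuclideanLin (B ^ K))
    obtain ⟨y, hy, x, hx, hyx, hTyx⟩ := exists_ne_norm_map_sub_le hnd T (half_pos hε)
    obtain ⟨k, a, b, rfl, rfl⟩ := exists_digitSum_eq_of_mem_Dinfty B hD0 hx hy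
    have hab : a ≠ b := by rintro rfl; exact hyx rfl
    have happend : Function.Injective fun p : (Fin K → D) × (Fin k → D) => Fin.append p.1 p.2 :=
      (Fin.appendEquiv K k).injective
    refine ⟨K + k, (S ×ˢ {a, b}).image fun p => Fin.append p.1 p.2, ?_,
      c + T (digitSum B D a), ?_⟩
    · rw [card_image_of_injective _ happend, card_product, card_pair hab, pow_succ]
      exact Nat.mul_le_mul_right 2 hS
    · simp only [mem_image, mem_product, mem_insert, mem_singleton]
      rintro _ ⟨⟨f, e⟩, ⟨hfS, he⟩, rfl⟩
      dsimp only at hfS he ⊢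
      have hf := mem_closedBall_iff_norm.mp (hSc f hfS)
      rw [mem_closedBall_iff_norm, digitSum_append]
      change ‖_ + T _ - _‖ ≤ ε
      rcases he with rfl | rfl
      · rw [add_sub_add_right_eq_sub]
        exact hf.trans (half_le_self hε.le)
      · calc ‖digitSum B D f + T (digitSum B D e) - (c + T (digitSum B D a))‖
            = ‖(digitSum B D f - c) + T (digitSum B D e - digitSum B D a)‖ := by
              rw [map_sub]; abel_nf
          _ ≤ ε / 2 + ε / 2 := norm_add_le_of_le hf hTyx
          _ = ε := add_halves ε

lemma card_le_selfAffineMeasure {K : ℕ} (S : Finset (Fin K → D))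
    {s : Set (EuclideanSpace ℝ (Fin n))} (hs : MeasurableSet s)
    (hS : ∀ f ∈ S, digitSum B D f ∈ s) : (#S : ℝ≥0∞) ≤ selfAffineMeasure B D s := by
  calc (#S : ℝ≥0∞) = ∑ f ∈ S, Measure.dirac (digitSum B D f) s := by
        simp +contextual [Measure.dirac_apply' _ hs, Set.indicator_of_mem, hS]
    _ ≤ ∑' f, Measure.dirac (digitSum B D f) s := ENNReal.sum_le_tsum S
    _ = Measure.sum (fun f : Fin K → D => Measure.dirac (digitSum B D f)) s :=
        (Measure.sum_apply _ hs).symm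
    _ ≤ selfAffineMeasure B D s := Measure.le_iff'.mp
        (le_iSup (fun N => Measure.sum fun f : Fin N → D => Measure.dirac (digitSum B D f)) K) s

lemma iSup_selfAffineMeasure_box_eq_top (hD0 : (0 : EuclideanSpace ℝ (Fin n)) ∈ D)
    (hnd : ∀ δ : ℝ, 0 < δ → ∃ x ∈ Dinfty B D, ∃ y ∈ Dinfty B D, x ≠ y ∧ ‖x - y‖ ≤ δ)
    {r : ℝ} (hr : 0 < r) :
    ⨆ z : EuclideanSpace ℝ (Fin n), selfAffineMeasure B D {y | ∀ i, |y i - z i| ≤ r} = ⊤ := by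
  refine ENNReal.eq_top_of_forall_nnreal_le fun t => ?_
  obtain ⟨m, htm⟩ := exists_nat_gt t
  obtain ⟨K, S, hS, c, hSc⟩ := exists_many_digitSum_mem_closedBall hD0 hnd m hr
  refine le_iSup_of_le c ?_
  calc (t : ℝ≥0∞) ≤ m := mod_cast htm.le
    _ ≤ #S := Nat.cast_le.mpr (Nat.lt_two_pow_self.le.trans hS)
    _ ≤ selfAffineMeasure B D (closedBall c r) :=
        card_le_selfAffineMeasure S measurableSet_closedBall hSc
    _ ≤ selfAffineMeasure B D {y | ∀ i, |y i - c i| ≤ r} :=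
        measure_mono (closedBall_subset_box c r)

end NotUniformlyDiscrete

theorem upperBeurling_top_of_not_uniformly_discrete_general {n : ℕ} (B : Matrix (Fin n) (Fin n) ℝ)
    (D : Finset (EuclideanSpace ℝ (Fin n))) (hD0 : (0 : EuclideanSpace ℝ (Fin n)) ∈ D)
    (hnd : ∀ δ : ℝ, 0 < δ → ∃ x ∈ Dinfty B D, ∃ y ∈ Dinfty B D, x ≠ y ∧ ‖x - y‖ ≤ δ) :
    beurlingUpper (selfAffineMeasure B D) = ⊤ := by
  have hscale : ∀ᶠ N : ℝ in atTop, (⨆ z : EuclideanSpace ℝ (Fin n),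
      selfAffineMeasure B D {y | ∀ i, |y i - z i| ≤ N / 2} / ENNReal.ofReal (N ^ n)) = ⊤ := by
    filter_upwards [eventually_gt_atTop 0] with N hN
    rw [← ENNReal.iSup_div, iSup_selfAffineMeasure_box_eq_top hD0 hnd (half_pos hN)]
    exact ENNReal.top_div_of_ne_top ENNReal.ofReal_ne_top
  rw [beurlingUpper, limsup_congr hscale, limsup_const]

/-- **Lemma.** Let `B` be an expanding real `n×n` matrix and `D ⊆ ℝⁿ` finite with `0 ∈ D`.
If `D_∞` is not uniformly discrete (for every `δ > 0` there are `x ≠ y` in `D_∞` with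
`‖x − y‖ ≤ δ`), then `D⁺(μ) = ∞`. -/
theorem upperBeurling_top_of_not_uniformly_discrete {n : ℕ} (B : Matrix (Fin n) (Fin n) ℝ)
    (hB : ∀ μ ∈ spectrum ℂ (B.map (algebraMap ℝ ℂ)), 1 < ‖μ‖)
    (D : Finset (EuclideanSpace ℝ (Fin n))) (hD0 : (0 : EuclideanSpace ℝ (Fin n)) ∈ D)
    (hnd : ∀ δ : ℝ, 0 < δ → ∃ x ∈ Dinfty B D, ∃ y ∈ Dinfty B D, x ≠ y ∧ ‖x - y‖ ≤ δ) :
    beurlingUpper (selfAffineMeasure B D) = ⊤ :=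
  upperBeurling_top_of_not_uniformly_discrete_general B D hD0 hnd
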